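/- arXiv:2503.20381 — 4 statements merged into one kernel-verified Lean document; each statement's English description precedes it below -/
import Mathlib

section
/- Let μ be a measure as in the context with μ(ℝ∖{0}) > 0, and let f be of bistable type with ∫₀¹ f(s) ds > 0. Suppose (c₁, u₁) and (c₂, u₂) are pairs with c₁ > 0, c₂ > 0 and u₁, u₂ : ℝ → ℝ bounded, monotone nonincreasing, of class C¹, such that for every x ∈ ℝ the principal values D_μ u_i(x) exist and D_μ u_i(x) + c_i u_i'(x) + f(u_i(x)) = 0, with lim_{x→−∞} u_i(x) = 1 and lim_{x→+∞} u_i(x) = 0 for i = 1, 2. Then c₁ = c₂. -/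
open MeasureTheory Filter Topology Set

/-- Truncated nonlocal operator `D_{μ,δ} u (x) = ∫_{|z| ≥ δ} (u(x+z) − u(x)) dμ(z)`. -/
noncomputable def Dtrunc (μ : Measure ℝ) (u : ℝ → ℝ) (δ : ℝ) (x : ℝ) : ℝ :=
  ∫ z in {z : ℝ | δ ≤ |z|}, (u (x + z) - u x) ∂μ

/-- The principal value `D_μ u (x)` exists and equals `L`. -/
def HasPV (μ : Measure ℝ) (u : ℝ → ℝ) (x : ℝ) (L : ℝ) : Prop :=
  Tendsto (fun δ => Dtrunc μ u δ x) (𝓝[>] (0 : ℝ)) (𝓝 L)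

/-- A symmetric diffuse Lévy measure as in the paper. -/
structure LevyMeasure (μ : Measure ℝ) : Prop where
  symm : Measure.map (fun z : ℝ => -z) μ = μ
  moment : ∫⁻ z, ENNReal.ofReal (min 1 (z ^ 2)) ∂μ < ⊤
  diffuse : ∀ x : ℝ, x ≠ 0 → μ {x} = 0

/-- A bistable nonlinearity with threshold `θ`. -/
structure Bistable (f : ℝ → ℝ) (θ : ℝ) : Prop where
  smooth : ContDiff ℝ 1 f
  f0 : f 0 = 0
  f1 : f 1 = 0
  df1 : deriv f 1 < 0
  θ_mem : θ ∈ Set.Ioo (0 : ℝ) 1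
  df0 : deriv f 0 < 0
  neg : ∀ s ∈ Set.Ioo (0 : ℝ) θ, f s < 0
  fθ : f θ = 0
  pos : ∀ s ∈ Set.Ioo θ (1 : ℝ), 0 < f s
  dfθ : 0 < deriv f θ

/-- An ignition nonlinearity with threshold `θ`. -/
structure Ignition (f : ℝ → ℝ) (θ : ℝ) : Prop where
  smooth : ContDiff ℝ 1 f
  f1 : f 1 = 0
  df1 : deriv f 1 < 0
  θ_mem : θ ∈ Set.Ioo (0 : ℝ) 1
  zero : ∀ s ∈ Set.Icc (0 : ℝ) θ, f s = 0
  pos : ∀ s ∈ Set.Ioo θ (1 : ℝ), 0 < f s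

/-- A monostable nonlinearity. -/
structure Monostable (f : ℝ → ℝ) : Prop where
  smooth : ContDiff ℝ 1 f
  f0 : f 0 = 0
  f1 : f 1 = 0
  df1 : deriv f 1 < 0
  pos : ∀ s ∈ Set.Ioo (0 : ℝ) 1, 0 < f s

/-!
Suppose `c₂ < c₁`, and let `φ`, `ψ` be fronts with these speeds. At a global maximum `x` of
`φ - ψ` the derivatives agree and the truncated nonlocal terms compare, so subtracting the two
equations gives `0 ≤ (c₁ - c₂) φ'(x) + f(φ x) - f(ψ x)` with `φ'(x) ≤ 0`. Hence
`f (ψ x) ≤ f (φ x)`; as `f' < 0` near `0` and `1`, a positive maximum can only sit in a fixed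
bounded window. Sliding `ψ` to the right until it lies above `φ`, the smallest admissible shift
therefore produces a touching point. At a touching point the same inequality forces `φ' = 0`
and `φ = ψ` at `μ`-almost every jump `x + z`. The touching set is closed and invariant under
translations by the support of `μ` off the origin, which is symmetric and (as `μ` has no atoms
there) uncountable; it thus generates a dense subgroup of `ℝ`, so `φ` touches `ψ` everywhere and
`φ' ≡ 0`, which contradicts the limits of `φ` at `±∞`.
-/

theorem measurableSet_tail (δ : ℝ) : MeasurableSet {z : ℝ | δ ≤ |z|} :=
  (isClosed_le continuous_const continuous_abs).measurableSet

theorem Continuous.exists_forall_ge_of_tendsto_zero {g : ℝ → ℝ} (hg : Continuous g)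
    (hbot : Tendsto g atBot (𝓝 0)) (htop : Tendsto g atTop (𝓝 0)) {x₀ : ℝ} (hx₀ : 0 < g x₀) :
    ∃ x, ∀ y, g y ≤ g x :=
  hg.exists_forall_ge' x₀ <| by
    rw [cocompact_eq_atBot_atTop, eventually_sup]
    exact ⟨(hbot.eventually_lt_const hx₀).mono fun _ => le_of_lt,
      (htop.eventually_lt_const hx₀).mono fun _ => le_of_lt⟩

theorem exists_margin_of_deriv_neg {f : ℝ → ℝ} (hf : ContDiff ℝ 1 f) (h0 : deriv f 0 < 0)
    (h1 : deriv f 1 < 0) :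
    ∃ η > 0, ∀ a b, 0 ≤ a → a < b → b ≤ 1 → f a ≤ f b → η ≤ b ∧ a ≤ 1 - η := by
  have hcont : Continuous (deriv f) := hf.continuous_deriv le_rfl
  obtain ⟨ε₀, hε₀, H₀⟩ := Metric.eventually_nhds_iff.1 ((hcont.tendsto 0).eventually_lt_const h0)
  obtain ⟨ε₁, hε₁, H₁⟩ := Metric.eventually_nhds_iff.1 ((hcont.tendsto 1).eventually_lt_const h1)
  refine ⟨min ε₀ ε₁, lt_min hε₀ hε₁, fun a b ha hab hb hfab => ?_⟩
  obtain ⟨s, ⟨has, hsb⟩, hs⟩ := exists_deriv_eq_slope f hab hf.continuous.continuousOn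
    (hf.differentiable one_ne_zero).differentiableOn
  have hs0 : 0 ≤ deriv f s := hs ▸ div_nonneg (sub_nonneg.2 hfab) (sub_nonneg.2 hab.le)
  have hε₀s : ε₀ ≤ s := by
    by_contra! h
    exact (H₀ (by rw [Real.dist_eq, sub_zero, abs_of_pos (by linarith)]; exact h)).not_ge hs0
  have hsε₁ : s ≤ 1 - ε₁ := by
    by_contra! h
    exact (H₁ (by rw [Real.dist_eq, abs_of_neg (by linarith)]; linarith)).not_ge hs0
  constructor <;> linarith [min_le_left ε₀ ε₁, min_le_right ε₀ ε₁]

theorem eq_univ_of_forall_add_mem {G : Type*} [AddCommGroup G] [LinearOrder G]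
    [IsOrderedAddMonoid G] [Archimedean G] [TopologicalSpace G] [OrderTopology G] {Z S : Set G}
    (hZ : IsClosed Z) (hne : Z.Nonempty) (hS : ¬ S.Countable) (hneg : ∀ s ∈ S, -s ∈ S)
    (hadd : ∀ x ∈ Z, ∀ s ∈ S, x + s ∈ Z) : Z = univ := by
  let P : AddSubmonoid G :=
    { carrier := {g | ∀ x ∈ Z, x + g ∈ Z}
      add_mem' := fun ha hb x hx => by simpa [add_assoc] using hb _ (ha x hx)
      zero_mem' := fun x hx => by simpa using hx }
  have hP : ∀ g ∈ AddSubgroup.closure S, ∀ x ∈ Z, x + g ∈ Z := by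
    intro g hg
    rw [← AddSubgroup.mem_toAddSubmonoid, AddSubgroup.closure_toAddSubmonoid] at hg
    refine (AddSubmonoid.closure_le (S := P)).2 ?_ hg
    rintro s (hs | hs)
    · exact fun x hx => hadd x hx s hs
    · exact fun x hx => by simpa using hadd x hx _ (hneg _ hs)
  obtain ⟨x₀, hx₀⟩ := hne
  rcases AddSubgroup.dense_or_cyclic (AddSubgroup.closure S) with hdense | ⟨a, ha⟩
  · refine eq_univ_of_forall fun x => ?_
    have := map_mem_closure (continuous_const_add x₀) (hdense (x - x₀)) fun g hg => hP g hg x₀ hx₀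
    simpa [hZ.closure_eq] using this
  · refine absurd ((countable_range fun n : ℤ => n • a).mono fun s hs => ?_) hS
    have : s ∈ AddSubgroup.closure {a} := ha ▸ AddSubgroup.subset_closure hs
    exact AddSubgroup.mem_closure_singleton.1 this

theorem MeasureTheory.Measure.not_countable_support {X : Type*} [TopologicalSpace X]
    [HereditarilyLindelofSpace X] [MeasurableSpace X] {ν : Measure X} [NullSingletonClass ν]
    (hν : ν ≠ 0) : ¬ ν.support.Countable := fun h =>
  hν <| Measure.measure_univ_eq_zero.1 <| by
    simpa using measure_union_null (h.measure_zero ν) ν.measure_compl_support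

theorem ae_restrict_compl_zero_of_setIntegral_tail_eq_zero {μ : Measure ℝ} {g : ℝ → ℝ}
    (hg : ∀ z, 0 ≤ g z) (hint : ∀ δ > 0, IntegrableOn g {z : ℝ | δ ≤ |z|} μ)
    (h0 : ∀ δ > 0, ∫ z in {z : ℝ | δ ≤ |z|}, g z ∂μ = 0) :
    ∀ᵐ z ∂μ.restrict {0}ᶜ, g z = 0 := by
  have hU : ({0}ᶜ : Set ℝ) = ⋃ n : ℕ, {z : ℝ | 1 / ((n : ℝ) + 1) ≤ |z|} := by
    ext z
    simp only [mem_compl_iff, mem_singleton_iff, mem_iUnion, mem_ofPred_eq]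
    constructor
    · intro hz
      obtain ⟨n, hn⟩ := exists_nat_one_div_lt (abs_pos.2 hz)
      exact ⟨n, hn.le⟩
    · rintro ⟨n, hn⟩ rfl
      simp only [abs_zero] at hn
      linarith [Nat.one_div_pos_of_nat (α := ℝ) (n := n)]
  rw [hU, ae_restrict_iUnion_iff]
  intro n
  have hδ : (0 : ℝ) < 1 / ((n : ℝ) + 1) := Nat.one_div_pos_of_nat
  exact (integral_eq_zero_iff_of_nonneg hg (hint _ hδ)).1 (h0 _ hδ)

theorem HasPV.comp_sub {μ : Measure ℝ} {u : ℝ → ℝ} {ξ x L : ℝ} (h : HasPV μ u (x - ξ) L) :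
    HasPV μ (fun y => u (y - ξ)) x L :=
  h.congr fun δ => by simp only [Dtrunc, sub_add_eq_add_sub]

namespace LevyMeasure

variable {μ : Measure ℝ}

theorem measure_tail_lt_top (hμ : LevyMeasure μ) {δ : ℝ} (hδ : 0 < δ) :
    μ {z : ℝ | δ ≤ |z|} < ⊤ := by
  set c := ENNReal.ofReal (min 1 (δ ^ 2))
  have hc : c ≠ 0 := by simp [c]; positivity
  have hle : c * μ {z : ℝ | δ ≤ |z|} ≤ ∫⁻ z, ENNReal.ofReal (min 1 (z ^ 2)) ∂μ :=
    calc c * μ {z : ℝ | δ ≤ |z|} = ∫⁻ _ in {z : ℝ | δ ≤ |z|}, c ∂μ := (setLIntegral_const _ _).symm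
      _ ≤ ∫⁻ z in {z : ℝ | δ ≤ |z|}, ENNReal.ofReal (min 1 (z ^ 2)) ∂μ := by
        refine setLIntegral_mono (by fun_prop) fun z hz => ?_
        exact ENNReal.ofReal_le_ofReal
          (min_le_min_left _ (by simpa [sq_abs] using pow_le_pow_left₀ hδ.le hz 2))
      _ ≤ _ := setLIntegral_le_lintegral _ _
  exact ENNReal.lt_top_of_mul_ne_top_right (hle.trans_lt hμ.moment).ne hc

theorem integrableOn_tail (hμ : LevyMeasure μ) {g : ℝ → ℝ} (hg : AEStronglyMeasurable g μ)
    {C : ℝ} (hC : ∀ z, |g z| ≤ C) {δ : ℝ} (hδ : 0 < δ) : IntegrableOn g {z : ℝ | δ ≤ |z|} μ :=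
  have : IsFiniteMeasure (μ.restrict {z : ℝ | δ ≤ |z|}) :=
    isFiniteMeasure_restrict.2 (hμ.measure_tail_lt_top hδ).ne
  Integrable.of_bound hg.restrict C (Eventually.of_forall hC)

theorem neg_mem_support_restrict (hμ : LevyMeasure μ) {s : ℝ}
    (hs : s ∈ (μ.restrict {0}ᶜ).support) : -s ∈ (μ.restrict {0}ᶜ).support := by
  have : μ.IsNegInvariant := ⟨hμ.symm⟩
  rw [Measure.mem_support_iff_forall] at hs ⊢
  intro U hU
  have hsets : Neg.neg ⁻¹' U ∩ {0}ᶜ = Neg.neg ⁻¹' (U ∩ {(0 : ℝ)}ᶜ) := by ext; simp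
  have h := hs _ (continuous_neg.continuousAt.preimage_mem_nhds hU)
  rwa [Measure.restrict_apply' (measurableSet_singleton 0).compl, hsets,
    Measure.measure_preimage_neg, ← Measure.restrict_apply' (measurableSet_singleton 0).compl] at h

theorem not_countable_support_restrict (hμ : LevyMeasure μ) (hμ0 : 0 < μ {0}ᶜ) :
    ¬ (μ.restrict {0}ᶜ).support.Countable := by
  have : NullSingletonClass (μ.restrict {0}ᶜ) := ⟨fun x => by
    rw [Measure.restrict_apply' (measurableSet_singleton 0).compl]
    rcases eq_or_ne x 0 with rfl | hx
    · simp
    · exact measure_mono_null inter_subset_left (hμ.diffuse x hx)⟩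
  refine Measure.not_countable_support fun h => hμ0.ne' ?_
  simpa using congrArg (fun ν : Measure ℝ => ν univ) h

theorem setIntegral_tail_le_of_forall_sub_le (hμ : LevyMeasure μ) {u v : ℝ → ℝ}
    (hu : Continuous u) (hv : Continuous v) {M : ℝ} (hub : ∀ y, |u y| ≤ M)
    (hvb : ∀ y, |v y| ≤ M) {x Lu Lv : ℝ} (hmax : ∀ y, u y - v y ≤ u x - v x)
    (hLu : HasPV μ u x Lu) (hLv : HasPV μ v x Lv) {δ : ℝ} (hδ : 0 < δ) :
    ∫ z in {z : ℝ | δ ≤ |z|}, (u x - v x - (u (x + z) - v (x + z))) ∂μ ≤ Lv - Lu := by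
  have hint : ∀ w : ℝ → ℝ, Continuous w → (∀ y, |w y| ≤ M) → ∀ δ > 0,
      IntegrableOn (fun z => w (x + z) - w x) {z : ℝ | δ ≤ |z|} μ := fun w hw hwb δ hδ =>
    hμ.integrableOn_tail (by fun_prop : Continuous fun z => w (x + z) - w x).aestronglyMeasurable
      (fun z => (abs_sub _ _).trans (add_le_add (hwb _) (hwb _))) hδ
  have hdiff : ∀ δ > 0, Dtrunc μ v δ x - Dtrunc μ u δ x =
      ∫ z in {z : ℝ | δ ≤ |z|}, (u x - v x - (u (x + z) - v (x + z))) ∂μ := fun δ hδ => by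
    rw [Dtrunc, Dtrunc, ← integral_sub (hint v hv hvb δ hδ) (hint u hu hub δ hδ)]
    congr 1 with z
    ring
  have hlim := (hLv.sub hLu).congr' (eventually_nhdsWithin_of_forall (s := Ioi 0) hdiff)
  refine ge_of_tendsto hlim ?_
  filter_upwards [Ioc_mem_nhdsGT hδ] with δ' hδ'
  refine setIntegral_mono_set ?_ (Eventually.of_forall fun z => sub_nonneg.2 (hmax _))
    (LE.le.eventuallyLE fun z hz => hδ'.2.trans hz)
  refine ((hint v hv hvb δ' hδ'.1).sub (hint u hu hub δ' hδ'.1)).congr_fun (fun z _ => ?_)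
    (measurableSet_tail δ')
  rw [Pi.sub_apply]
  ring

end LevyMeasure

structure IsTravelingFront (μ : Measure ℝ) (f : ℝ → ℝ) (c : ℝ) (u : ℝ → ℝ) : Prop where
  antitone : Antitone u
  contDiff : ContDiff ℝ 1 u
  hasPV_eq : ∀ x, ∃ L : ℝ, HasPV μ u x L ∧ L + c * deriv u x + f (u x) = 0
  tendsto_atBot : Tendsto u atBot (𝓝 1)
  tendsto_atTop : Tendsto u atTop (𝓝 0)

namespace IsTravelingFront

variable {μ : Measure ℝ} {f : ℝ → ℝ} {c c₁ c₂ : ℝ} {u φ ψ : ℝ → ℝ}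

theorem differentiable (hu : IsTravelingFront μ f c u) : Differentiable ℝ u :=
  hu.contDiff.differentiable one_ne_zero

theorem continuous (hu : IsTravelingFront μ f c u) : Continuous u :=
  hu.differentiable.continuous

theorem mem_Icc (hu : IsTravelingFront μ f c u) (x : ℝ) : u x ∈ Icc 0 1 :=
  ⟨le_of_tendsto hu.tendsto_atTop (eventually_atTop.2 ⟨x, fun _ hy => hu.antitone hy⟩),
    ge_of_tendsto hu.tendsto_atBot (eventually_atBot.2 ⟨x, fun _ hy => hu.antitone hy⟩)⟩

theorem abs_le_one (hu : IsTravelingFront μ f c u) (x : ℝ) : |u x| ≤ 1 :=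
  abs_le.2 ⟨by linarith [(hu.mem_Icc x).1], (hu.mem_Icc x).2⟩

theorem comp_sub (hu : IsTravelingFront μ f c u) (ξ : ℝ) :
    IsTravelingFront μ f c (fun x => u (x - ξ)) where
  antitone := hu.antitone.comp_monotone fun _ _ h => sub_le_sub_right h ξ
  contDiff := hu.contDiff.comp (contDiff_id.sub contDiff_const)
  hasPV_eq x := by
    obtain ⟨L, hL, heq⟩ := hu.hasPV_eq (x - ξ)
    exact ⟨L, hL.comp_sub, by rwa [deriv_comp_sub_const]⟩
  tendsto_atBot := by
    simpa [sub_eq_add_neg, Function.comp_def] using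
      hu.tendsto_atBot.comp (tendsto_atBot_add_const_right atBot (-ξ) tendsto_id)
  tendsto_atTop := by
    simpa [sub_eq_add_neg, Function.comp_def] using
      hu.tendsto_atTop.comp (tendsto_atTop_add_const_right atTop (-ξ) tendsto_id)

theorem not_forall_deriv_eq_zero (hu : IsTravelingFront μ f c u) : ¬ ∀ x, deriv u x = 0 := by
  intro h
  have hconst : u = fun _ => u 0 :=
    funext fun x => is_const_of_deriv_eq_zero hu.differentiable h x 0
  have h1 := hu.tendsto_atBot
  have h0 := hu.tendsto_atTop
  rw [hconst, tendsto_const_nhds_iff] at h1 h0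
  exact one_ne_zero (h1.symm.trans h0)

theorem setIntegral_tail_le (hμ : LevyMeasure μ) (hφ : IsTravelingFront μ f c₁ φ)
    (hψ : IsTravelingFront μ f c₂ ψ) {x : ℝ} (hmax : ∀ y, φ y - ψ y ≤ φ x - ψ x) {δ : ℝ}
    (hδ : 0 < δ) :
    ∫ z in {z : ℝ | δ ≤ |z|}, (φ x - ψ x - (φ (x + z) - ψ (x + z))) ∂μ ≤
      (c₁ - c₂) * deriv φ x + (f (φ x) - f (ψ x)) := by
  obtain ⟨L₁, hL₁, heq₁⟩ := hφ.hasPV_eq x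
  obtain ⟨L₂, hL₂, heq₂⟩ := hψ.hasPV_eq x
  have hderiv : deriv ψ x = deriv φ x := by
    have h := (show IsLocalMax (fun y => φ y - ψ y) x from Eventually.of_forall hmax).deriv_eq_zero
    rw [deriv_fun_sub (hφ.differentiable x) (hψ.differentiable x)] at h
    linarith
  have := hμ.setIntegral_tail_le_of_forall_sub_le hφ.continuous hψ.continuous hφ.abs_le_one
    hψ.abs_le_one hmax hL₁ hL₂ hδ
  rw [hderiv] at heq₂
  linarith

theorem apply_le_apply_of_forall_sub_le (hμ : LevyMeasure μ) (hφ : IsTravelingFront μ f c₁ φ)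
    (hψ : IsTravelingFront μ f c₂ ψ) (hc : c₂ ≤ c₁) {x : ℝ}
    (hmax : ∀ y, φ y - ψ y ≤ φ x - ψ x) : f (ψ x) ≤ f (φ x) := by
  have hI := hφ.setIntegral_tail_le hμ hψ hmax one_pos
  have hI0 : 0 ≤ ∫ z in {z : ℝ | 1 ≤ |z|}, (φ x - ψ x - (φ (x + z) - ψ (x + z))) ∂μ :=
    setIntegral_nonneg (measurableSet_tail 1) fun z _ => sub_nonneg.2 (hmax _)
  nlinarith [mul_nonpos_of_nonneg_of_nonpos (sub_nonneg.2 hc) (hφ.antitone.deriv_nonpos (x := x))]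

theorem deriv_eq_zero_and_ae_eq_of_touching (hμ : LevyMeasure μ)
    (hφ : IsTravelingFront μ f c₁ φ) (hψ : IsTravelingFront μ f c₂ ψ) (hc : c₂ < c₁)
    (hle : ∀ y, φ y ≤ ψ y) {x : ℝ} (hx : φ x = ψ x) :
    deriv φ x = 0 ∧ ∀ᵐ z ∂μ.restrict {0}ᶜ, φ (x + z) = ψ (x + z) := by
  have hmax : ∀ y, φ y - ψ y ≤ φ x - ψ x := fun y => by linarith [hle y]
  have hI : ∀ δ > 0, ∫ z in {z : ℝ | δ ≤ |z|}, (ψ (x + z) - φ (x + z)) ∂μ ≤ (c₁ - c₂) * deriv φ x :=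
    fun δ hδ => by simpa [hx] using hφ.setIntegral_tail_le hμ hψ hmax hδ
  have hI0 : ∀ δ : ℝ, 0 ≤ ∫ z in {z : ℝ | δ ≤ |z|}, (ψ (x + z) - φ (x + z)) ∂μ := fun δ =>
    setIntegral_nonneg (measurableSet_tail δ) fun z _ => sub_nonneg.2 (hle _)
  have hderiv : deriv φ x = 0 := by
    refine le_antisymm (hφ.antitone.deriv_nonpos) ?_
    have := (hI0 1).trans (hI 1 one_pos)
    exact nonneg_of_mul_nonneg_right (by linarith) (sub_pos.2 hc)
  refine ⟨hderiv, ?_⟩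
  have hint : ∀ δ > 0, IntegrableOn (fun z => ψ (x + z) - φ (x + z)) {z : ℝ | δ ≤ |z|} μ :=
    fun δ hδ => hμ.integrableOn_tail
      ((hψ.continuous.comp (continuous_const_add x)).sub
        (hφ.continuous.comp (continuous_const_add x))).aestronglyMeasurable
      (fun z => (abs_sub _ _).trans (add_le_add (hψ.abs_le_one _) (hφ.abs_le_one _))) hδ
  refine (ae_restrict_compl_zero_of_setIntegral_tail_eq_zero (fun z => sub_nonneg.2 (hle _)) hint
    fun δ hδ => le_antisymm (by simpa [hderiv] using hI δ hδ) (hI0 δ)).mono fun z hz => ?_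
  linarith

end IsTravelingFront

section Sliding

variable {μ : Measure ℝ} {f : ℝ → ℝ} {c₁ c₂ : ℝ} {φ ψ : ℝ → ℝ}

theorem exists_window (hμ : LevyMeasure μ) (hf : ContDiff ℝ 1 f) (hf0 : deriv f 0 < 0)
    (hf1 : deriv f 1 < 0) (hφ : IsTravelingFront μ f c₁ φ) (hψ : IsTravelingFront μ f c₂ ψ)
    (hc : c₂ ≤ c₁) :
    ∃ X Y : ℝ, ∀ ξ x₀, ψ (x₀ - ξ) < φ x₀ → ∃ x, ψ (x - ξ) < φ x ∧ Y + ξ < x ∧ x < X := by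
  obtain ⟨η, hη, hmargin⟩ := exists_margin_of_deriv_neg hf hf0 hf1
  obtain ⟨X, hX⟩ := eventually_atTop.1 (hφ.tendsto_atTop.eventually_lt_const hη)
  obtain ⟨Y, hY⟩ :=
    eventually_atBot.1 (hψ.tendsto_atBot.eventually_const_lt (by linarith : 1 - η < 1))
  refine ⟨X, Y, fun ξ x₀ hx₀ => ?_⟩
  have hψξ := hψ.comp_sub ξ
  obtain ⟨x, hx⟩ := Continuous.exists_forall_ge_of_tendsto_zero (g := fun y => φ y - ψ (y - ξ))
    (hφ.continuous.sub hψξ.continuous)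
    (by simpa using hφ.tendsto_atBot.sub hψξ.tendsto_atBot)
    (by simpa using hφ.tendsto_atTop.sub hψξ.tendsto_atTop) (sub_pos.2 hx₀)
  have hlt : ψ (x - ξ) < φ x := by linarith [hx x₀]
  obtain ⟨hφx, hψx⟩ := hmargin _ _ (hψξ.mem_Icc x).1 hlt (hφ.mem_Icc x).2
    (hφ.apply_le_apply_of_forall_sub_le hμ hψξ hc hx)
  refine ⟨x, hlt, ?_, ?_⟩
  · by_contra! h
    linarith [hY (x - ξ) (by linarith)]
  · by_contra! h
    linarith [hX x h]

theorem exists_touching_translate (hμ : LevyMeasure μ) (hf : ContDiff ℝ 1 f)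
    (hf0 : deriv f 0 < 0) (hf1 : deriv f 1 < 0) (hφ : IsTravelingFront μ f c₁ φ)
    (hψ : IsTravelingFront μ f c₂ ψ) (hc : c₂ ≤ c₁) :
    ∃ ξ, (∀ x, φ x ≤ ψ (x - ξ)) ∧ ∃ x, φ x = ψ (x - ξ) := by
  obtain ⟨X, Y, hwin⟩ := exists_window hμ hf hf0 hf1 hφ hψ hc
  set S := {ξ : ℝ | ∀ x, φ x ≤ ψ (x - ξ)}
  have hwin' : ∀ ξ ∉ S, ∃ x, ψ (x - ξ) < φ x ∧ Y + ξ < x ∧ x < X := fun ξ hξ => by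
    obtain ⟨x₀, h⟩ : ∃ x₀, ψ (x₀ - ξ) < φ x₀ := by simpa [S] using hξ
    exact hwin ξ x₀ h
  have hne : X - Y ∈ S := by
    by_contra h
    obtain ⟨x, -, h₁, h₂⟩ := hwin' _ h
    linarith
  have hbdd : BddBelow S := by
    obtain ⟨x₀, hx₀⟩ :=
      (hφ.tendsto_atBot.eventually_const_lt (by norm_num : (1 : ℝ) / 2 < 1)).exists
    obtain ⟨Z, hZ⟩ := eventually_atTop.1 (hψ.tendsto_atTop.eventually_lt_const one_half_pos)
    refine ⟨x₀ - Z, fun ξ hξ => ?_⟩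
    by_contra! h
    linarith [hZ (x₀ - ξ) (by linarith), hξ x₀]
  have hclosed : IsClosed S := by
    simp only [S, ofPred_forall]
    exact isClosed_iInter fun x =>
      isClosed_le continuous_const (hψ.continuous.comp (continuous_const.sub continuous_id))
  have hξs : sInf S ∈ S := hclosed.csInf_mem ⟨_, hne⟩ hbdd
  refine ⟨sInf S, hξs, ?_⟩
  by_contra! hgap
  -- by compactness, the strict gap on the window persists for slightly smaller shifts
  have hnear : ∀ᶠ ξ in 𝓝 (sInf S), ∀ x ∈ Icc (Y + sInf S - 1) X, φ x < ψ (x - ξ) :=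
    isCompact_Icc.eventually_forall_of_forall_eventually fun x _ =>
      (hφ.continuous.comp continuous_snd).continuousAt.eventually_lt
        (hψ.continuous.comp (continuous_snd.sub continuous_fst)).continuousAt
        ((hξs x).lt_of_ne (hgap x))
  obtain ⟨ξ, hξ, hξS⟩ := ((hnear.filter_mono nhdsWithin_le_nhds).and
    (Ioo_mem_nhdsLT (by linarith : sInf S - 1 < sInf S))).exists
  obtain ⟨x, hx, h₁, h₂⟩ := hwin' ξ (notMem_of_lt_csInf hξS.2 hbdd)
  exact (hξ x ⟨by linarith [hξS.1], h₂.le⟩).not_gt hx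

theorem false_of_touching (hμ : LevyMeasure μ) (hμ0 : 0 < μ {0}ᶜ)
    (hφ : IsTravelingFront μ f c₁ φ) (hψ : IsTravelingFront μ f c₂ ψ) (hc : c₂ < c₁)
    (hle : ∀ x, φ x ≤ ψ x) (htouch : ∃ x, φ x = ψ x) : False := by
  have hZ : {x | φ x = ψ x} = univ := by
    refine eq_univ_of_forall_add_mem (isClosed_eq hφ.continuous hψ.continuous) htouch
      (hμ.not_countable_support_restrict hμ0) (fun _ => hμ.neg_mem_support_restrict)
      fun x hx s hs => ?_
    refine Measure.support_subset_of_isClosed (t := {z | φ (x + z) = ψ (x + z)}) ?_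
      (hφ.deriv_eq_zero_and_ae_eq_of_touching hμ hψ hc hle hx).2 hs
    exact isClosed_eq (hφ.continuous.comp (continuous_const_add x))
      (hψ.continuous.comp (continuous_const_add x))
  exact hφ.not_forall_deriv_eq_zero fun x =>
    (hφ.deriv_eq_zero_and_ae_eq_of_touching hμ hψ hc hle (hZ.symm ▸ mem_univ x : x ∈ _)).1

theorem IsTravelingFront.speed_le (hμ : LevyMeasure μ) (hμ0 : 0 < μ {0}ᶜ)
    (hf : ContDiff ℝ 1 f) (hf0 : deriv f 0 < 0) (hf1 : deriv f 1 < 0)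
    (hφ : IsTravelingFront μ f c₁ φ) (hψ : IsTravelingFront μ f c₂ ψ) : c₁ ≤ c₂ := by
  by_contra! hc
  obtain ⟨ξ, hle, htouch⟩ := exists_touching_translate hμ hf hf0 hf1 hφ hψ hc.le
  exact false_of_touching hμ hμ0 hφ (hψ.comp_sub ξ) hc hle htouch

end Sliding

theorem bistable_speed_unique_general
    (μ : Measure ℝ) (hμ : LevyMeasure μ) (hμ0 : 0 < μ ({(0 : ℝ)}ᶜ))
    (f : ℝ → ℝ) (hf : ∃ θ, Bistable f θ)
    (c₁ c₂ : ℝ) (u₁ u₂ : ℝ → ℝ)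
    (ha₁ : Antitone u₁) (ha₂ : Antitone u₂)
    (hs₁ : ContDiff ℝ 1 u₁) (hs₂ : ContDiff ℝ 1 u₂)
    (he₁ : ∀ x, ∃ L : ℝ, HasPV μ u₁ x L ∧ L + c₁ * deriv u₁ x + f (u₁ x) = 0)
    (he₂ : ∀ x, ∃ L : ℝ, HasPV μ u₂ x L ∧ L + c₂ * deriv u₂ x + f (u₂ x) = 0)
    (hl₁b : Tendsto u₁ atBot (𝓝 (1 : ℝ))) (hl₁t : Tendsto u₁ atTop (𝓝 (0 : ℝ)))
    (hl₂b : Tendsto u₂ atBot (𝓝 (1 : ℝ))) (hl₂t : Tendsto u₂ atTop (𝓝 (0 : ℝ))) :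
    c₁ = c₂ := by
  obtain ⟨θ, hθ⟩ := hf
  have h₁ : IsTravelingFront μ f c₁ u₁ := ⟨ha₁, hs₁, he₁, hl₁b, hl₁t⟩
  have h₂ : IsTravelingFront μ f c₂ u₂ := ⟨ha₂, hs₂, he₂, hl₂b, hl₂t⟩
  exact le_antisymm (h₁.speed_le hμ hμ0 hθ.smooth hθ.df0 hθ.df1 h₂)
    (h₂.speed_le hμ hμ0 hθ.smooth hθ.df0 hθ.df1 h₁)

/-- uniqueness of the speed for bistable fronts. -/
theorem bistable_speed_unique
    (μ : Measure ℝ) (hμ : LevyMeasure μ) (hμ0 : 0 < μ ({(0 : ℝ)}ᶜ))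
    (f : ℝ → ℝ) (hf : ∃ θ, Bistable f θ)
    (hint : 0 < ∫ s in (0:ℝ)..1, f s)
    (c₁ c₂ : ℝ) (u₁ u₂ : ℝ → ℝ)
    (hc₁ : 0 < c₁) (hc₂ : 0 < c₂)
    (hb₁ : ∃ M : ℝ, ∀ x, |u₁ x| ≤ M) (hb₂ : ∃ M : ℝ, ∀ x, |u₂ x| ≤ M)
    (ha₁ : Antitone u₁) (ha₂ : Antitone u₂)
    (hs₁ : ContDiff ℝ 1 u₁) (hs₂ : ContDiff ℝ 1 u₂)
    (he₁ : ∀ x, ∃ L : ℝ, HasPV μ u₁ x L ∧ L + c₁ * deriv u₁ x + f (u₁ x) = 0)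
    (he₂ : ∀ x, ∃ L : ℝ, HasPV μ u₂ x L ∧ L + c₂ * deriv u₂ x + f (u₂ x) = 0)
    (hl₁b : Tendsto u₁ atBot (𝓝 (1 : ℝ))) (hl₁t : Tendsto u₁ atTop (𝓝 (0 : ℝ)))
    (hl₂b : Tendsto u₂ atBot (𝓝 (1 : ℝ))) (hl₂t : Tendsto u₂ atTop (𝓝 (0 : ℝ))) :
    c₁ = c₂ :=
  bistable_speed_unique_general μ hμ hμ0 f hf c₁ c₂ u₁ u₂ ha₁ ha₂ hs₁ hs₂ he₁ he₂ hl₁b hl₁t hl₂b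
    hl₂t
end

section
/- Let μ be a nonnegative Borel measure on ℝ, invariant under the reflection z ↦ −z, with μ(ℝ) < ∞, and let f ∈ C¹(ℝ). Let c ≠ 0 and let u ∈ C²(ℝ) be bounded, monotone nonincreasing, with lim_{x→−∞} u(x) = 1 and lim_{x→+∞} u(x) = 0, satisfying c u'(x) + ∫_ℝ (u(x+z) − u(x)) dμ(z) + f(u(x)) = 0 for every x ∈ ℝ. Then u' ∈ L²(ℝ) and c ∫_ℝ u'(x)² dx = ∫₀¹ f(s) ds. -/
/-!
Multiply the equation by `u'` and integrate over `ℝ`. By the substitution `s = u(x)`,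
`∫ f(u) u' = ∫₁⁰ f`. The nonlocal term vanishes: by Fubini, `∫ u' D_μ u = ∫ I dμ` with
`I(z) = ∫ u'(x) (u(x+z) - u(x)) dx`, and `I` is odd because integrating `(u(x) u(x+z))'`
and translating gives `J(z) + J(-z) = u(+∞)² - u(-∞)²` for `J(z) = ∫ u'(x) u(x+z) dx`;
so `∫ I dμ = 0` for the symmetric `μ`.
All integrals converge because `u' ∈ L¹` (as `u` is monotone and bounded), and `u' ∈ L²`
because the equation bounds `u'` when `c ≠ 0`.
-/

open MeasureTheory Filter Topology Set

theorem integral_eq_zero_of_odd_of_map_neg_eq {G E : Type*} [MeasurableSpace G] [InvolutiveNeg G]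
    [MeasurableNeg G] [NormedAddCommGroup E] [NormedSpace ℝ E] {μ : Measure G}
    (hμ : μ.map (fun z => -z) = μ) {g : G → E} (hg : ∀ z, g (-z) = -g z) :
    ∫ z, g z ∂μ = 0 := by
  have h : ∫ z, g z ∂μ = -∫ z, g z ∂μ :=
    calc ∫ z, g z ∂μ = ∫ z, g z ∂(μ.map (MeasurableEquiv.neg G)) := by
          conv_lhs => rw [← hμ]
          rfl
      _ = ∫ z, g (-z) ∂μ := integral_map_equiv _ _
      _ = -∫ z, g z ∂μ := by simp only [hg, integral_neg]
  rw [eq_neg_iff_add_eq_zero, ← two_smul ℝ] at h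
  exact (smul_eq_zero.mp h).resolve_left two_ne_zero

theorem MeasureTheory.Integrable.memLp_two_of_abs_le {α : Type*} [MeasurableSpace α]
    {μ : Measure α} {g : α → ℝ} (hg : Integrable g μ) {C : ℝ} (hC : ∀ x, |g x| ≤ C) : MemLp g 2 μ :=
  (memLp_two_iff_integrable_sq hg.1).2 <| by
    simpa only [sq] using hg.bdd_mul hg.1 (ae_of_all _ hC)

section

variable {u : ℝ → ℝ} {M : ℝ}

theorem abs_sub_le_two_mul_of_abs_le (hM : ∀ x, |u x| ≤ M) (x y : ℝ) : |u x - u y| ≤ 2 * M := by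
  linarith [abs_sub (u x) (u y), hM x, hM y]

theorem integrable_deriv_of_antitone_of_abs_le (hu : ContDiff ℝ 1 u) (ha : Antitone u)
    (hM : ∀ x, |u x| ≤ M) : Integrable (deriv u) := by
  have hu' := hu.continuous_deriv le_rfl
  refine integrable_of_intervalIntegral_norm_bounded (2 * M) (fun _ => hu'.integrableOn_Ioc)
    tendsto_neg_atTop_atBot tendsto_id (Eventually.of_forall fun R => ?_)
  have hnorm : ∫ x in -R..R, ‖deriv u x‖ = -∫ x in -R..R, deriv u x := by
    rw [← intervalIntegral.integral_neg]
    exact intervalIntegral.integral_congr fun x _ => abs_of_nonpos ha.deriv_nonpos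
  rw [id, hnorm, intervalIntegral.integral_deriv_eq_sub
    (fun x _ => hu.differentiable one_ne_zero x) (hu'.intervalIntegrable _ _)]
  linarith [abs_le.mp (hM R), abs_le.mp (hM (-R))]

theorem integrable_comp_mul_deriv (hu : Continuous u) (hu'i : Integrable (deriv u))
    (hM : ∀ x, |u x| ≤ M) {g : ℝ → ℝ} (hg : Continuous g) :
    Integrable fun x => g (u x) * deriv u x := by
  obtain ⟨K, hK⟩ :=
    (isCompact_Icc (a := -M) (b := M)).exists_bound_of_continuousOn hg.continuousOn
  exact hu'i.bdd_mul (hg.comp hu).aestronglyMeasurable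
    (ae_of_all _ fun x => hK _ (abs_le.mp (hM x)))

theorem integral_comp_mul_deriv_of_tendsto (hu : ContDiff ℝ 1 u) (hu'i : Integrable (deriv u))
    (hM : ∀ x, |u x| ≤ M) {g : ℝ → ℝ} (hg : Continuous g) {a b : ℝ}
    (hbot : Tendsto u atBot (𝓝 a)) (htop : Tendsto u atTop (𝓝 b)) :
    ∫ x, g (u x) * deriv u x = ∫ s in a..b, g s := by
  set Φ : ℝ → ℝ := fun t => ∫ s in a..t, g s
  have hΦ : ∀ t, HasDerivAt Φ (g t) t := fun t => (hg.integral_hasStrictDerivAt a t).hasDerivAt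
  have hΦc : Continuous Φ := continuous_iff_continuousAt.2 fun t => (hΦ t).continuousAt
  have h := integral_of_hasDerivAt_of_tendsto
    (fun x => (hΦ (u x)).comp x (hu.differentiable one_ne_zero x).hasDerivAt)
    (integrable_comp_mul_deriv hu.continuous hu'i hM hg)
    ((hΦc.tendsto a).comp hbot) ((hΦc.tendsto b).comp htop)
  simpa [Φ] using h

theorem integral_deriv_mul_comp_add_add_neg (hu : ContDiff ℝ 1 u) (hu'i : Integrable (deriv u))
    (hM : ∀ x, |u x| ≤ M) {a b : ℝ} (hbot : Tendsto u atBot (𝓝 a))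
    (htop : Tendsto u atTop (𝓝 b)) (z : ℝ) :
    (∫ x, deriv u x * u (x + z)) + ∫ x, deriv u x * u (x + -z) = b ^ 2 - a ^ 2 := by
  have hud := hu.differentiable one_ne_zero
  have hi₁ : Integrable fun x => deriv u x * u (x + z) :=
    hu'i.mul_bdd (hu.continuous.comp (continuous_add_const z)).aestronglyMeasurable
      (ae_of_all _ fun x => hM (x + z))
  have hi₂ : Integrable fun x => u x * deriv u (x + z) :=
    (hu'i.comp_add_right z).bdd_mul hu.continuous.aestronglyMeasurable (ae_of_all _ hM)
  have hshift : ∫ x, deriv u x * u (x + -z) = ∫ x, u x * deriv u (x + z) := by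
    rw [← integral_add_right_eq_self _ z]
    simp only [add_neg_cancel_right, mul_comm]
  have hibp := integral_deriv_mul_eq_sub (u := u) (v := fun x => u (x + z))
    (u' := deriv u) (v' := fun x => deriv u (x + z)) (a' := a * a) (b' := b * b)
    (fun x _ => (hud x).hasDerivAt)
    (fun x _ => ((hud (x + z)).hasDerivAt.comp x ((hasDerivAt_id x).add_const z)).congr_deriv
      (mul_one _))
    (hi₁.add hi₂)
    (hbot.mul (hbot.comp (tendsto_atBot_add_const_right _ z tendsto_id)))
    (htop.mul (htop.comp (tendsto_atTop_add_const_right _ z tendsto_id)))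
  rw [integral_add hi₁ hi₂] at hibp
  rw [hshift, sq, sq, hibp]

theorem integral_deriv_mul_sub_comp_add_neg_eq_neg (hu : ContDiff ℝ 1 u)
    (hu'i : Integrable (deriv u)) (hM : ∀ x, |u x| ≤ M) {a b : ℝ} (hbot : Tendsto u atBot (𝓝 a))
    (htop : Tendsto u atTop (𝓝 b)) (z : ℝ) :
    ∫ x, deriv u x * (u (x + -z) - u x) = -∫ x, deriv u x * (u (x + z) - u x) := by
  have hi : ∀ w, Integrable fun x => deriv u x * u (x + w) := fun w =>
    hu'i.mul_bdd (hu.continuous.comp (continuous_add_const w)).aestronglyMeasurable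
      (ae_of_all _ fun x => hM (x + w))
  have hsplit : ∀ w, ∫ x, deriv u x * (u (x + w) - u x) =
      (∫ x, deriv u x * u (x + w)) - ∫ x, deriv u x * u (x + 0) := fun w => by
    simp only [mul_sub, add_zero]
    exact integral_sub (hi w) (by simpa using hi 0)
  have hz := integral_deriv_mul_comp_add_add_neg hu hu'i hM hbot htop z
  have h0 := integral_deriv_mul_comp_add_add_neg hu hu'i hM hbot htop 0
  rw [neg_zero] at h0
  rw [hsplit, hsplit]
  linarith

theorem integral_deriv_mul_nonlocal_eq_zero {μ : Measure ℝ} [IsFiniteMeasure μ]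
    (hμ : μ.map (fun z => -z) = μ) (hu : ContDiff ℝ 1 u) (hu'i : Integrable (deriv u))
    (hM : ∀ x, |u x| ≤ M) {a b : ℝ} (hbot : Tendsto u atBot (𝓝 a))
    (htop : Tendsto u atTop (𝓝 b)) :
    ∫ x, deriv u x * ∫ z, (u (x + z) - u x) ∂μ = 0 := by
  have hcont : Continuous fun p : ℝ × ℝ => deriv u p.1 * (u (p.1 + p.2) - u p.1) := by
    have := hu.continuous
    have := hu.continuous_deriv le_rfl
    fun_prop
  have hF : Integrable (fun p : ℝ × ℝ => deriv u p.1 * (u (p.1 + p.2) - u p.1))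
      (volume.prod μ) := by
    refine (hu'i.mul_prod (integrable_const (2 * M))).mono hcont.aestronglyMeasurable
      (ae_of_all _ fun p => ?_)
    rw [norm_mul, norm_mul]
    gcongr
    exact (abs_sub_le_two_mul_of_abs_le hM _ _).trans (le_abs_self _)
  calc ∫ x, deriv u x * ∫ z, (u (x + z) - u x) ∂μ
      = ∫ x, ∫ z, deriv u x * (u (x + z) - u x) ∂μ := by simp_rw [integral_const_mul]
    _ = ∫ z, (∫ x, deriv u x * (u (x + z) - u x)) ∂μ := integral_integral_swap hF
    _ = 0 := integral_eq_zero_of_odd_of_map_neg_eq hμ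
          (integral_deriv_mul_sub_comp_add_neg_eq_neg hu hu'i hM hbot htop)

theorem exists_abs_deriv_le_of_travelingWave_eq {μ : Measure ℝ} [IsFiniteMeasure μ] {f : ℝ → ℝ}
    (hf : Continuous f) {c : ℝ} (hc : c ≠ 0) (hM : ∀ x, |u x| ≤ M)
    (heq : ∀ x, c * deriv u x + (∫ z, (u (x + z) - u x) ∂μ) + f (u x) = 0) :
    ∃ C, ∀ x, |deriv u x| ≤ C := by
  obtain ⟨K, hK⟩ := (isCompact_Icc (a := -M) (b := M)).exists_bound_of_continuousOn
    hf.continuousOn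
  refine ⟨(2 * M * μ.real univ + K) / |c|, fun x => ?_⟩
  have hD : ‖∫ z, (u (x + z) - u x) ∂μ‖ ≤ 2 * M * μ.real univ :=
    norm_integral_le_of_norm_le_const
      (ae_of_all _ fun z => abs_sub_le_two_mul_of_abs_le hM (x + z) x)
  rw [le_div_iff₀ (abs_pos.mpr hc), mul_comm, ← abs_mul,
    show c * deriv u x = -((∫ z, (u (x + z) - u x) ∂μ) + f (u x)) by linarith [heq x], abs_neg]
  exact (abs_add_le _ _).trans (add_le_add hD (hK _ (abs_le.mp (hM x))))

end

/-- the energy identity `c ∫ u'² = ∫₀¹ f` (Proposition 2.1 (1)). -/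
theorem front_energy_identity
    (μ : Measure ℝ) [IsFiniteMeasure μ]
    (hsymm : Measure.map (fun z : ℝ => -z) μ = μ)
    (f : ℝ → ℝ) (hf : ContDiff ℝ 1 f)
    (c : ℝ) (hc : c ≠ 0)
    (u : ℝ → ℝ) (hu : ContDiff ℝ 2 u)
    (hb : ∃ M : ℝ, ∀ x, |u x| ≤ M) (ha : Antitone u)
    (hlb : Tendsto u atBot (𝓝 (1 : ℝ))) (hlt : Tendsto u atTop (𝓝 (0 : ℝ)))
    (heq : ∀ x, c * deriv u x + (∫ z, (u (x + z) - u x) ∂μ) + f (u x) = 0) :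
    MemLp (deriv u) 2 (volume : Measure ℝ) ∧
    c * ∫ x : ℝ, (deriv u x) ^ 2 = ∫ s in (0:ℝ)..1, f s := by
  obtain ⟨M, hM⟩ := hb
  have hu₁ : ContDiff ℝ 1 u := hu.of_le (by norm_num)
  have hu'i := integrable_deriv_of_antitone_of_abs_le hu₁ ha hM
  obtain ⟨C, hC⟩ := exists_abs_deriv_le_of_travelingWave_eq hf.continuous hc hM heq
  have hL2 := hu'i.memLp_two_of_abs_le hC
  refine ⟨hL2, ?_⟩
  have hnonlocal : ∀ x, deriv u x * ∫ z, (u (x + z) - u x) ∂μ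
      = -(c * deriv u x ^ 2) - f (u x) * deriv u x := fun x => by
    linear_combination deriv u x * heq x
  have h := integral_deriv_mul_nonlocal_eq_zero hsymm hu₁ hu'i hM hlb hlt
  simp_rw [hnonlocal] at h
  have hsq : Integrable fun x => -(c * deriv u x ^ 2) := (hL2.integrable_sq.const_mul c).neg
  rw [integral_sub hsq (integrable_comp_mul_deriv hu₁.continuous hu'i hM hf.continuous),
    integral_neg, integral_const_mul,
    integral_comp_mul_deriv_of_tendsto hu₁ hu'i hM hf.continuous hlb hlt,
    intervalIntegral.integral_symm] at h
  linarith
end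

section
/- Let μ be a nonnegative Borel measure on ℝ, invariant under the reflection z ↦ −z, with μ(ℝ) < ∞, and let f ∈ C¹(ℝ). Let c ≠ 0 and let u ∈ C²(ℝ) be bounded, monotone nonincreasing, with lim_{x→−∞} u(x) = 1 and lim_{x→+∞} u(x) = 0, satisfying c u'(x) + ∫_ℝ (u(x+z) − u(x)) dμ(z) + f(u(x)) = 0 for every x ∈ ℝ. Then c² · sup_{x∈ℝ} |u''(x)| ≤ (2 μ(ℝ) + sup_{s∈[0,1]} |f(s)| + sup_{s∈[0,1]} |f'(s)|)². -/
open MeasureTheory Filter Topology Set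

/-! The bound comes from differentiating the equation once. Since `u` takes values in `[0, 1]`,
`|D_μ u| ≤ μ(ℝ)`, so the equation gives `|c| |u'| ≤ μ(ℝ) + sup |f|`. The derivative of `D_μ u` is
`D_μ u'` (dominated convergence, `u'` being bounded), and `|D_μ u'| ≤ 2 μ(ℝ) sup |u'|`; the
differentiated equation `c u'' + D_μ u' + f'(u) u' = 0` then bounds `|c| |u''|` by
`(2 μ(ℝ) + sup |f'|) sup |u'|`. -/

/-- The paper's `D_μ`. -/
noncomputable def nonlocalOp (μ : Measure ℝ) (u : ℝ → ℝ) (x : ℝ) : ℝ :=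
  ∫ z, (u (x + z) - u x) ∂μ

section nonlocalOp

variable {μ : Measure ℝ} [IsFiniteMeasure μ] {u : ℝ → ℝ}

theorem abs_nonlocalOp_le {C : ℝ} (hC : ∀ x y, |u x - u y| ≤ C) (x : ℝ) :
    |nonlocalOp μ u x| ≤ C * μ.real univ :=
  (Real.norm_eq_abs _).symm.trans_le <|
    norm_integral_le_of_norm_le_const (ae_of_all _ fun z => hC (x + z) x)

theorem hasDerivAt_nonlocalOp {C C' : ℝ} (hu : Differentiable ℝ u)
    (hC : ∀ x y, |u x - u y| ≤ C) (hC' : ∀ x y, |deriv u x - deriv u y| ≤ C') (x₀ : ℝ) :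
    HasDerivAt (nonlocalOp μ u) (nonlocalOp μ (deriv u) x₀) x₀ := by
  have hmeas : ∀ {g : ℝ → ℝ}, Measurable g → ∀ x,
      AEStronglyMeasurable (fun z => g (x + z) - g x) μ := fun {g} hg x =>
    ((hg.comp (measurable_const_add x)).sub_const (g x)).aestronglyMeasurable
  refine (hasDerivAt_integral_of_dominated_loc_of_deriv_le
    (F' := fun x z => deriv u (x + z) - deriv u x) (bound := fun _ => C') univ_mem
    (Eventually.of_forall (hmeas hu.continuous.measurable))
    ((integrable_const C).mono' (hmeas hu.continuous.measurable x₀) (ae_of_all _ fun z => hC _ _))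
    (hmeas (measurable_deriv u) x₀) (ae_of_all _ fun z x _ => hC' _ _) (integrable_const C')
    (ae_of_all _ fun z x _ => ?_)).2
  exact ((hu (x + z)).hasDerivAt.comp_add_const x z).sub (hu x).hasDerivAt

end nonlocalOp

theorem IsCompact.abs_le_sSup_image_abs {β : Type*} [TopologicalSpace β] {K : Set β}
    (hK : IsCompact K) {h : β → ℝ} (hh : ContinuousOn h K) {s : β} (hs : s ∈ K) :
    |h s| ≤ sSup ((fun s => |h s|) '' K) :=
  le_csSup (hK.bddAbove_image hh.abs) (mem_image_of_mem _ hs)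

theorem abs_mul_le_of_add_add_eq_zero {c v a b A B : ℝ} (h : c * v + a + b = 0)
    (ha : |a| ≤ A) (hb : |b| ≤ B) : |c| * |v| ≤ A + B := by
  rw [← abs_mul, show c * v = -(a + b) by linarith, abs_neg]
  exact (abs_add_le a b).trans (add_le_add ha hb)

section travelingWave

variable {μ : Measure ℝ} [IsFiniteMeasure μ] {f : ℝ → ℝ} {c : ℝ} {u : ℝ → ℝ}
  (heq : ∀ x, c * deriv u x + nonlocalOp μ u x + f (u x) = 0)
include heq

theorem abs_mul_deriv_le {A : ℝ} (hosc : ∀ x y, |u x - u y| ≤ 1) (hfu : ∀ x, |f (u x)| ≤ A)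
    (x : ℝ) : |c| * |deriv u x| ≤ μ.real univ + A :=
  abs_mul_le_of_add_add_eq_zero (heq x) ((abs_nonlocalOp_le hosc x).trans_eq (one_mul _)) (hfu x)

theorem mul_deriv_deriv_add_nonlocalOp_deriv_add_eq_zero {C C' : ℝ} (hf : Differentiable ℝ f)
    (hu : Differentiable ℝ u) (hu' : Differentiable ℝ (deriv u)) (hC : ∀ x y, |u x - u y| ≤ C)
    (hC' : ∀ x y, |deriv u x - deriv u y| ≤ C') (x : ℝ) :
    c * deriv (deriv u) x + nonlocalOp μ (deriv u) x + deriv f (u x) * deriv u x = 0 := by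
  have h := (((hu' x).hasDerivAt.const_mul c).add (hasDerivAt_nonlocalOp (μ := μ) hu hC hC' x)).add
    ((hf (u x)).hasDerivAt.comp x (hu x).hasDerivAt)
  rw [show (fun y => c * deriv u y) + nonlocalOp μ u + f ∘ u = fun _ => 0 from funext heq] at h
  exact h.unique (hasDerivAt_const x 0)

theorem abs_mul_deriv_deriv_le {C K B : ℝ} (hf : Differentiable ℝ f) (hu : Differentiable ℝ u)
    (hu' : Differentiable ℝ (deriv u)) (hC : ∀ x y, |u x - u y| ≤ C)
    (hK : ∀ x, |deriv u x| ≤ K) (hf'u : ∀ x, |deriv f (u x)| ≤ B) (x : ℝ) :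
    |c| * |deriv (deriv u) x| ≤ (2 * μ.real univ + B) * K := by
  have hosc' (y z : ℝ) : |deriv u y - deriv u z| ≤ 2 * K :=
    (abs_sub _ _).trans (by linarith [hK y, hK z])
  have hB : 0 ≤ B := (abs_nonneg _).trans (hf'u x)
  have hf'u' : |deriv f (u x) * deriv u x| ≤ B * K := by
    rw [abs_mul]; exact mul_le_mul (hf'u x) (hK x) (abs_nonneg _) hB
  calc |c| * |deriv (deriv u) x|
      ≤ 2 * K * μ.real univ + B * K := abs_mul_le_of_add_add_eq_zero
        (mul_deriv_deriv_add_nonlocalOp_deriv_add_eq_zero heq hf hu hu' hC hosc' x)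
        (abs_nonlocalOp_le hosc' x) hf'u'
    _ = (2 * μ.real univ + B) * K := by ring

end travelingWave

theorem front_second_deriv_bound_general
    (μ : Measure ℝ) [IsFiniteMeasure μ]
    (f : ℝ → ℝ) (hf : ContDiff ℝ 1 f)
    (c : ℝ) (hc : c ≠ 0)
    (u : ℝ → ℝ) (hu : ContDiff ℝ 2 u)
    (ha : Antitone u)
    (hlb : Tendsto u atBot (𝓝 (1 : ℝ))) (hlt : Tendsto u atTop (𝓝 (0 : ℝ)))
    (heq : ∀ x, c * deriv u x + (∫ z, (u (x + z) - u x) ∂μ) + f (u x) = 0) :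
    ∀ x, c ^ 2 * |deriv (deriv u) x| ≤
      (2 * (μ Set.univ).toReal + sSup ((fun s => |f s|) '' Set.Icc (0:ℝ) 1)
        + sSup ((fun s => |deriv f s|) '' Set.Icc (0:ℝ) 1)) ^ 2 := by
  intro x
  set m := μ.real univ
  set A := sSup ((fun s => |f s|) '' Icc (0:ℝ) 1)
  set B := sSup ((fun s => |deriv f s|) '' Icc (0:ℝ) 1)
  have hu01 (y : ℝ) : u y ∈ Icc (0 : ℝ) 1 := ⟨ha.le_of_tendsto hlt y, ha.ge_of_tendsto hlb y⟩
  have hosc (y z : ℝ) : |u y - u z| ≤ 1 := Real.dist_le_of_mem_Icc_01 (hu01 y) (hu01 z)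
  have hfu (y : ℝ) : |f (u y)| ≤ A :=
    isCompact_Icc.abs_le_sSup_image_abs hf.continuous.continuousOn (hu01 y)
  have hf'u (y : ℝ) : |deriv f (u y)| ≤ B :=
    isCompact_Icc.abs_le_sSup_image_abs (hf.continuous_deriv le_rfl).continuousOn (hu01 y)
  have hcK : |c| * ((m + A) / |c|) = m + A := mul_div_cancel₀ _ (abs_ne_zero.2 hc)
  have hK (y : ℝ) : |deriv u y| ≤ (m + A) / |c| := by
    rw [le_div_iff₀ (abs_pos.2 hc), mul_comm]; exact abs_mul_deriv_le heq hosc hfu y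
  have hu'' := abs_mul_deriv_deriv_le heq (hf.differentiable one_ne_zero)
    (hu.differentiable two_ne_zero) hu.differentiable_deriv_two hosc hK hf'u x
  have hm : 0 ≤ m := measureReal_nonneg
  have hA : 0 ≤ A := (abs_nonneg _).trans (hfu x)
  have hB : 0 ≤ B := (abs_nonneg _).trans (hf'u x)
  calc c ^ 2 * |deriv (deriv u) x| = |c| * (|c| * |deriv (deriv u) x|) := by
        rw [← sq_abs]; ring
    _ ≤ |c| * ((2 * m + B) * ((m + A) / |c|)) := by gcongr
    _ = (m + A) * (2 * m + B) := by rw [mul_left_comm, hcK, mul_comm]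
    _ ≤ (2 * m + A + B) ^ 2 := by
        rw [sq]; exact mul_le_mul (by linarith) (by linarith) (by linarith) (by linarith)

/-- uniform bound on `u''` (Proposition 2.1 (3)). -/
theorem front_second_deriv_bound
    (μ : Measure ℝ) [IsFiniteMeasure μ]
    (hsymm : Measure.map (fun z : ℝ => -z) μ = μ)
    (f : ℝ → ℝ) (hf : ContDiff ℝ 1 f)
    (c : ℝ) (hc : c ≠ 0)
    (u : ℝ → ℝ) (hu : ContDiff ℝ 2 u)
    (hb : ∃ M : ℝ, ∀ x, |u x| ≤ M) (ha : Antitone u)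
    (hlb : Tendsto u atBot (𝓝 (1 : ℝ))) (hlt : Tendsto u atTop (𝓝 (0 : ℝ)))
    (heq : ∀ x, c * deriv u x + (∫ z, (u (x + z) - u x) ∂μ) + f (u x) = 0) :
    ∀ x, c ^ 2 * |deriv (deriv u) x| ≤
      (2 * (μ Set.univ).toReal + sSup ((fun s => |f s|) '' Set.Icc (0:ℝ) 1)
        + sSup ((fun s => |deriv f s|) '' Set.Icc (0:ℝ) 1)) ^ 2 :=
  front_second_deriv_bound_general μ f hf c hc u hu ha hlb hlt heq
end

section
/- Let μ be a measure as in the context with ∫_ℝ min(|z|, z²) dμ(z) < ∞, and let f be of ignition type with threshold θ. Let ε ∈ (0,1) and let (c, u) be a pair with c > 0 and u ∈ C²(ℝ) bounded, monotone nonincreasing, 0 ≤ u ≤ 1, u(0) = θ, satisfying −c u'(x) = ∫_{|z| ≥ ε} (u(x+z) − u(x)) dμ(z) + f(u(x)) for every x ∈ ℝ, lim_{x→−∞} u(x) = 1, lim_{x→+∞} u(x) = 0, and lim_{x→+∞} u'(x) = 0, with u' bounded. Then c · θ ≤ (1 + sup_{x∈ℝ} |u'(x)|) · ∫_ℝ min(|z|,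 z²) dμ(z). -/
open MeasureTheory Filter Topology Set

/-- upper bound on the speed in the ignition case (Proposition 5.2). -/
theorem ignition_speed_upper_bound
    (μ : Measure ℝ) (hμ : LevyMeasure μ)
    (hmom : ∫⁻ z, ENNReal.ofReal (min |z| (z ^ 2)) ∂μ < ⊤)
    (f : ℝ → ℝ) (θ : ℝ) (hf : Ignition f θ)
    (ε : ℝ) (hε : ε ∈ Set.Ioo (0 : ℝ) 1)
    (c : ℝ) (hc : 0 < c)
    (u : ℝ → ℝ) (hu : ContDiff ℝ 2 u)
    (hrange : ∀ x, u x ∈ Set.Icc (0 : ℝ) 1)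
    (ha : Antitone u) (hu0 : u 0 = θ)
    (heq : ∀ x, -c * deriv u x
      = (∫ z in {z : ℝ | ε ≤ |z|}, (u (x + z) - u x) ∂μ) + f (u x))
    (hlb : Tendsto u atBot (𝓝 (1 : ℝ))) (hlt : Tendsto u atTop (𝓝 (0 : ℝ)))
    (hd0 : Tendsto (deriv u) atTop (𝓝 (0 : ℝ)))
    (hdb : ∃ M : ℝ, ∀ x, |deriv u x| ≤ M) :
    c * θ ≤ (1 + ⨆ x : ℝ, |deriv u x|)
      * (∫⁻ z, ENNReal.ofReal (min |z| (z ^ 2)) ∂μ).toReal := by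
  classical
  -- basic facts about `u`
  have hu_cont : Continuous u := hu.continuous
  have hdiff : Differentiable ℝ u := hu.differentiable (by norm_num)
  have hd_cont : Continuous (deriv u) := hu.continuous_deriv (by norm_num)
  have hui : ∀ a b : ℝ, IntervalIntegrable u volume a b := fun a b =>
    hu_cont.intervalIntegrable a b
  set M := ⨆ x : ℝ, |deriv u x| with hMdef
  have hbdd : BddAbove (Set.range fun x => |deriv u x|) := by
    obtain ⟨C, hC⟩ := hdb
    exact ⟨C, by rintro _ ⟨x, rfl⟩; exact hC x⟩
  have hM : ∀ x, |deriv u x| ≤ M := fun x => le_ciSup hbdd x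
  have hM0 : 0 ≤ M := le_trans (abs_nonneg _) (hM 0)
  have hLip : ∀ a b : ℝ, |u a - u b| ≤ M * |a - b| := by
    have hlip : LipschitzWith M.toNNReal u := by
      apply lipschitzWith_of_nnnorm_deriv_le hdiff
      intro x
      rw [← NNReal.coe_le_coe]
      simpa [Real.coe_toNNReal _ hM0] using hM x
    intro a b
    have := hlip.dist_le_mul a b
    rwa [Real.dist_eq, Real.dist_eq, Real.coe_toNNReal _ hM0] at this
  -- measure-theoretic setup
  set S : Set ℝ := {z : ℝ | ε ≤ |z|} with hS
  have hSm : MeasurableSet S := (isClosed_le continuous_const continuous_abs).measurableSet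
  have hSfin : μ S < ⊤ := by
    by_contra h
    push_neg at h
    have htop : μ S = ⊤ := top_le_iff.mp h
    have hbound : ∀ z ∈ S, ENNReal.ofReal (min ε (ε^2)) ≤ ENNReal.ofReal (min |z| (z ^ 2)) := by
      intro z hz
      have hz' : ε ≤ |z| := hz
      apply ENNReal.ofReal_le_ofReal
      apply le_min
      · exact le_trans (min_le_left _ _) hz'
      · refine le_trans (min_le_right _ _) ?_
        have : ε^2 ≤ |z|^2 := by nlinarith [hε.1.le, abs_nonneg z]
        calc ε^2 ≤ |z|^2 := this
        _ = z^2 := sq_abs z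
    have h1 : (ENNReal.ofReal (min ε (ε^2))) * μ S
        ≤ ∫⁻ z in S, ENNReal.ofReal (min |z| (z ^ 2)) ∂μ := by
      rw [← setLIntegral_const]
      exact setLIntegral_mono' hSm hbound
    have h2 : (ENNReal.ofReal (min ε (ε^2))) * μ S < ⊤ :=
      lt_of_le_of_lt (h1.trans (setLIntegral_le_lintegral _ _)) hmom
    rw [htop, ENNReal.mul_top] at h2
    · exact absurd h2 (lt_irrefl _)
    · simp only [ne_eq, ENNReal.ofReal_eq_zero, not_le]
      have := hε.1
      positivity
  set ν := μ.restrict S with hν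
  haveI : IsFiniteMeasure ν := ⟨by rwa [Measure.restrict_apply_univ]⟩
  have hmap : ν.map (fun z : ℝ => -z) = ν := by
    have hpre : (fun z : ℝ => -z) ⁻¹' S = S := by
      ext z; simp [hS, abs_neg]
    calc ν.map (fun z : ℝ => -z) = ((μ.map (fun z : ℝ => -z)).restrict S) := by
          rw [Measure.restrict_map measurable_neg hSm, hpre]
        _ = ν := by rw [hμ.symm]
  set I := (∫⁻ z, ENNReal.ofReal (min |z| (z ^ 2)) ∂μ).toReal with hI
  -- integrability of the moment function on ν
  have hmin_int : Integrable (fun z : ℝ => min |z| (z^2)) ν := by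
    constructor
    · exact (continuous_abs.min (continuous_pow 2)).aestronglyMeasurable
    · rw [hasFiniteIntegral_iff_ofReal
        (ae_of_all _ fun z => le_min (abs_nonneg z) (sq_nonneg z))]
      exact lt_of_le_of_lt (setLIntegral_le_lintegral S _) hmom
  have hIle : ∫ z, min |z| (z^2) ∂ν ≤ I := by
    rw [integral_eq_lintegral_of_nonneg_ae
      (ae_of_all _ fun z => le_min (abs_nonneg z) (sq_nonneg z))
      (continuous_abs.min (continuous_pow 2)).aestronglyMeasurable]
    exact ENNReal.toReal_mono hmom.ne (setLIntegral_le_lintegral S _)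
  have hImin0 : 0 ≤ ∫ z, min |z| (z^2) ∂ν :=
    integral_nonneg fun z => le_min (abs_nonneg z) (sq_nonneg z)
  -- MAIN STEP : for every R ≥ 0, c * (θ - u R) ≤ (1 + M) * I
  have key : ∀ R : ℝ, 0 ≤ R → c * (θ - u R) ≤ (1 + M) * I := by
    intro R hR
    set g : ℝ → ℝ := fun z => (∫ t in R..(R+z), u t) - ∫ t in (0:ℝ)..(0+z), u t with hg
    -- Step 1: c * (θ - u R) = ∫ g ∂ν
    haveI : IsFiniteMeasure (volume.restrict (Set.Ioc (0:ℝ) R)) :=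
      ⟨by rw [Measure.restrict_apply_univ, Real.volume_Ioc]; exact ENNReal.ofReal_lt_top⟩
    have hFcont : Continuous (Function.uncurry fun x z : ℝ => u (x + z) - u x) :=
      (hu_cont.comp (continuous_fst.add continuous_snd)).sub (hu_cont.comp continuous_fst)
    have hFint : Integrable (Function.uncurry fun x z : ℝ => u (x + z) - u x)
        ((volume.restrict (Set.Ioc (0:ℝ) R)).prod ν) := by
      apply (integrable_const (1:ℝ)).mono' hFcont.aestronglyMeasurable
      apply ae_of_all
      rintro ⟨x, z⟩
      have h1 := hrange (x + z)
      have h2 := hrange x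
      simp only [Set.mem_Icc] at h1 h2
      rw [Function.uncurry, Real.norm_eq_abs, abs_le]
      constructor <;> linarith
    have hinner : ∀ z : ℝ, (∫ x in Set.Ioc (0:ℝ) R, (u (x + z) - u x)) = g z := by
      intro z
      rw [← intervalIntegral.integral_of_le hR]
      have h1 : (∫ x in (0:ℝ)..R, (u (x + z) - u x))
          = (∫ x in (0:ℝ)..R, u (x + z)) - ∫ x in (0:ℝ)..R, u x :=
        intervalIntegral.integral_sub
          ((hu_cont.comp (continuous_id.add continuous_const)).intervalIntegrable _ _)
          (hui _ _)
      have h2 : (∫ x in (0:ℝ)..R, u (x + z)) = ∫ t in (0+z)..(R+z), u t :=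
        intervalIntegral.integral_comp_add_right u z
      have h3 := intervalIntegral.integral_add_adjacent_intervals
        (hui (0+z) R) (hui R (R+z))
      have h4 := intervalIntegral.integral_add_adjacent_intervals
        (hui 0 (0+z)) (hui (0+z) R)
      rw [h1, h2, hg]
      simp only []
      linarith
    have hstep1 : c * (θ - u R) = ∫ z, g z ∂ν := by
      have hA : (∫ x in (0:ℝ)..R, -c * deriv u x) = c * (θ - u R) := by
        rw [intervalIntegral.integral_const_mul,
          intervalIntegral.integral_deriv_eq_sub (fun x _ => hdiff x)
            (hd_cont.intervalIntegrable _ _), hu0]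
        ring
      have hB : (∫ x in (0:ℝ)..R, -c * deriv u x)
          = ∫ x in (0:ℝ)..R, (∫ z, (u (x + z) - u x) ∂ν) := by
        apply intervalIntegral.integral_congr
        intro x hx
        rw [Set.uIcc_of_le hR] at hx
        have hux : u x ∈ Set.Icc (0:ℝ) θ := by
          refine ⟨(hrange x).1, ?_⟩
          rw [← hu0]
          exact ha hx.1
        have hx2 := heq x
        rw [hf.zero _ hux] at hx2
        show -c * deriv u x = ∫ z, (u (x + z) - u x) ∂ν
        rw [hx2, add_zero]
      have hC : (∫ x in (0:ℝ)..R, (∫ z, (u (x + z) - u x) ∂ν))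
          = ∫ z, (∫ x in Set.Ioc (0:ℝ) R, (u (x + z) - u x)) ∂ν := by
        rw [intervalIntegral.integral_of_le hR]
        exact integral_integral_swap hFint
      rw [← hA, hB, hC]
      exact integral_congr_ae (ae_of_all _ hinner)
    -- Step 2: integrability of g and g ∘ neg
    have hg_int : Integrable g ν := by
      have := hFint.integral_prod_right
      exact this.congr (ae_of_all _ hinner)
    have hgm : AEStronglyMeasurable g (ν.map (fun z : ℝ => -z)) := by
      rw [hmap]; exact hg_int.1
    have hgneg_int : Integrable (fun z => g (-z)) ν := by
      have h1 : Integrable g (ν.map (fun z : ℝ => -z)) := by rw [hmap]; exact hg_int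
      exact (integrable_map_measure hgm measurable_neg.aemeasurable).mp h1
    have hsym : ∫ z, g z ∂ν = ∫ z, g (-z) ∂ν := by
      conv_lhs => rw [← hmap]
      exact integral_map measurable_neg.aemeasurable hgm
    -- Step 3: pointwise bound (from part 2 analysis)
    have hTsum : ∀ a z : ℝ, 0 ≤ z →
        (∫ t in a..(a+z), u t) + (∫ t in a..(a+(-z)), u t) ≤ 0 := by
      intro a z hz
      have h1 : (∫ t in a..(a+z), u t) = ∫ t in (a-z)..a, u (t + z) := by
        rw [intervalIntegral.integral_comp_add_right u z]
        congr 1 <;> ring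
      have h2 : (∫ t in (a-z)..a, u (t+z)) ≤ ∫ t in (a-z)..a, u t := by
        apply intervalIntegral.integral_mono_on (by linarith) _ (hui _ _)
        · intro x _; exact ha (by linarith)
        · exact (hu_cont.comp (continuous_id.add continuous_const)).intervalIntegrable _ _
      have h3 : (∫ t in a..(a+(-z)), u t) = - ∫ t in (a-z)..a, u t := by
        rw [intervalIntegral.integral_symm]
        congr 1 <;> ring_nf
      rw [h1, h3]; linarith
    have hT0 : ∀ z : ℝ, 0 ≤ z →
        -(((∫ t in (0:ℝ)..(0+z), u t)) + (∫ t in (0:ℝ)..(0+(-z)), u t))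
          ≤ z * min 1 (M*z) := by
      intro z hz
      have h1 : (∫ t in (0:ℝ)..(0+z), u t) = ∫ t in (-z)..(0:ℝ), u (t + z) := by
        rw [intervalIntegral.integral_comp_add_right u z]
        congr 1 <;> ring
      have h2 : (∫ t in (0:ℝ)..(0+(-z)), u t) = - ∫ t in (-z)..(0:ℝ), u t := by
        rw [intervalIntegral.integral_symm]
        congr 1 <;> ring_nf
      have h3 : (∫ t in (-z)..(0:ℝ), (u t - u (t+z))) ≤ ∫ t in (-z)..(0:ℝ), min 1 (M*z) := by
        apply intervalIntegral.integral_mono_on (by linarith)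
        · exact ((hui _ _).sub
            ((hu_cont.comp (continuous_id.add continuous_const)).intervalIntegrable _ _))
        · exact intervalIntegrable_const
        · intro x _
          apply le_min
          · have h4 := hrange x; have h5 := hrange (x+z)
            simp only [Set.mem_Icc] at h4 h5; linarith
          · have := hLip x (x+z)
            have habs : |x - (x+z)| = z := by rw [abs_of_nonpos (by linarith)]; ring
            rw [habs] at this
            calc u x - u (x+z) ≤ |u x - u (x+z)| := le_abs_self _
            _ ≤ M * z := this
      have h4 : (∫ t in (-z)..(0:ℝ), min 1 (M*z)) = z * min 1 (M*z) := by
        simp [intervalIntegral.integral_const]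
      have h5 : (∫ t in (-z)..(0:ℝ), (u t - u (t+z)))
          = (∫ t in (-z)..(0:ℝ), u t) - ∫ t in (-z)..(0:ℝ), u (t+z) := by
        apply intervalIntegral.integral_sub (hui _ _)
        exact (hu_cont.comp (continuous_id.add continuous_const)).intervalIntegrable _ _
      rw [h1, h2]
      rw [h5, h4] at h3
      linarith
    have harith : ∀ z : ℝ, 0 ≤ z → z * min 1 (M*z) ≤ (1 + M) * min |z| (z^2) := by
      intro z hz
      rw [abs_of_nonneg hz]
      rcases le_total z 1 with h | h
      · have hm : min z (z^2) = z^2 := min_eq_right (by nlinarith)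
        rw [hm]
        have h2 := min_le_right 1 (M*z)
        nlinarith [mul_le_mul_of_nonneg_left h2 hz]
      · have hm : min z (z^2) = z := min_eq_left (by nlinarith)
        rw [hm]
        have h2 := min_le_left 1 (M*z)
        nlinarith [mul_le_mul_of_nonneg_left h2 hz]
    have hkey : ∀ z : ℝ, g z + g (-z) ≤ (1 + M) * min |z| (z^2) := by
      have hkey' : ∀ z : ℝ, 0 ≤ z → g z + g (-z) ≤ (1 + M) * min |z| (z^2) := by
        intro z hz
        have t1 := hTsum R z hz
        have t2 := hT0 z hz
        have t3 := harith z hz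
        simp only [hg]
        linarith
      intro z
      rcases le_total 0 z with hz | hz
      · exact hkey' z hz
      · have h := hkey' (-z) (by linarith)
        rw [neg_neg] at h
        have he : min |(-z)| ((-z)^2) = min |z| (z^2) := by rw [abs_neg]; ring_nf
        rw [he] at h
        linarith
    -- Step 4: combine
    have hbnd_int : Integrable (fun z : ℝ => (1+M) * min |z| (z^2)) ν :=
      hmin_int.const_mul _
    have hmono : ∫ z, (g z + g (-z)) ∂ν ≤ ∫ z, (1+M) * min |z| (z^2) ∂ν :=
      integral_mono (hg_int.add hgneg_int) hbnd_int hkey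
    have hadd : ∫ z, (g z + g (-z)) ∂ν = (∫ z, g z ∂ν) + ∫ z, g (-z) ∂ν :=
      integral_add hg_int hgneg_int
    have hval : ∫ z, (1+M) * min |z| (z^2) ∂ν = (1+M) * ∫ z, min |z| (z^2) ∂ν :=
      integral_const_mul _ _
    have hfin : (1+M) * ∫ z, min |z| (z^2) ∂ν ≤ (1+M) * I :=
      mul_le_mul_of_nonneg_left hIle (by linarith)
    have h2 : 2 * (c * (θ - u R)) ≤ (1+M) * I := by
      rw [hstep1, hsym]
      calc 2 * (∫ z, g (-z) ∂ν) = (∫ z, g z ∂ν) + ∫ z, g (-z) ∂ν := by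
            rw [hsym]; ring
        _ = ∫ z, (g z + g (-z)) ∂ν := hadd.symm
        _ ≤ ∫ z, (1+M) * min |z| (z^2) ∂ν := hmono
        _ = (1+M) * ∫ z, min |z| (z^2) ∂ν := hval
        _ ≤ (1+M) * I := hfin
    have hB0 : 0 ≤ (1+M) * I := mul_nonneg (by linarith) ENNReal.toReal_nonneg
    linarith
  -- Step 5: take the limit R → ∞
  have hten : Tendsto (fun R => c * (θ - u R)) atTop (𝓝 (c * θ)) := by
    have h1 : Tendsto (fun R => θ - u R) atTop (𝓝 (θ - 0)) :=
      tendsto_const_nhds.sub hlt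
    have h2 := h1.const_mul c
    simpa using h2
  exact le_of_tendsto hten ((eventually_ge_atTop (0:ℝ)).mono key)
end
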